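/- arXiv:2408.10626 — 5 statements merged into one kernel-verified Lean document; each statement's English description precedes it below -/
import Mathlib

section
/- Let B be a β-set with e-quotient (B_0, …, B_{e−1}). Then for every i ∈ {0, …, e−1}, δ_i(B) = s(B_i) − s(B_{i−1}) − [i = 0], where the index i − 1 is taken modulo e (so B_{−1} means B_{e−1}) and [i = 0] equals 1 if i = 0 and 0 otherwise. -/
/-- A β-set: a subset of ℤ having a maximum element, whose complement has a minimum element. -/
def IsBetaSet (B : Set ℤ) : Prop :=
  (∃ m ∈ B, ∀ x ∈ B, x ≤ m) ∧ (∃ m, m ∉ B ∧ ∀ x, x ∉ B → m ≤ x)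

/-- The charge s(B) = |B ∩ ℤ≥0| − |ℤ<0 ∖ B| of a β-set. -/
noncomputable def charge (B : Set ℤ) : ℤ :=
  ((B ∩ {x : ℤ | 0 ≤ x}).ncard : ℤ) - (({x : ℤ | x < 0} \ B).ncard : ℤ)

/-- B^{+k} = {x + k : x ∈ B}. -/
def shiftSet (B : Set ℤ) (k : ℤ) : Set ℤ := (fun x => x + k) '' B

/-- δ_i(B) for i ∈ ℤ/eℤ. -/
noncomputable def deltaOf (e : ℕ) (i : ZMod e) (B : Set ℤ) : ℤ :=
  ({x : ℤ | x ∈ B ∧ (x : ZMod e) = i ∧ x - 1 ∉ B}.ncard : ℤ)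
    - ({x : ℤ | x ∈ B ∧ (x : ZMod e) = i - 1 ∧ x + 1 ∉ B}.ncard : ℤ)

/-- The i-th component B_i = {a : ae + i ∈ B} of the e-quotient of B. -/
def quotComp (e : ℕ) (B : Set ℤ) (i : ℕ) : Set ℤ :=
  {a : ℤ | a * (e : ℤ) + (i : ℤ) ∈ B}

/-- The e-core of B: ⋃_{i<e} {ae + i : a < s(B_i)}. -/
noncomputable def coreSet (e : ℕ) (B : Set ℤ) : Set ℤ :=
  {x : ℤ | ∃ i < e, ∃ a : ℤ, a < charge (quotComp e B i) ∧ x = a * (e : ℤ) + (i : ℤ)}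

/-- The e-weight of B: for each quotient component C = B_i, the a-th term
b_{ia} − s(C) + a equals the number of y ∉ C below the a-th bead b_{ia}, so the inner sum
counts the pairs (x, y) with x ∈ C, y ∉ C, y < x. -/
noncomputable def wtSet (e : ℕ) (B : Set ℤ) : ℕ :=
  ∑ i ∈ Finset.range e,
    {p : ℤ × ℤ | p.1 ∈ quotComp e B i ∧ p.2 ∉ quotComp e B i ∧ p.2 < p.1}.ncard

/-- υ_j(ae + b) = aeℓ + (ℓ−j)e + b. -/
def upsilon (e ℓ j : ℕ) (x : ℤ) : ℤ :=
  (x - x % (e : ℤ)) * (ℓ : ℤ) + ((ℓ : ℤ) - (j : ℤ)) * (e : ℤ) + x % (e : ℤ)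

/-- The Uglov map U(B^{(1)}, …, B^{(ℓ)}) = ⋃_j υ_j(B^{(j)}) (the j-th component of the
tuple, indexed by Fin ℓ, is B^{(j+1)} of the paper). -/
def uglovU (e ℓ : ℕ) (B : Fin ℓ → Set ℤ) : Set ℤ :=
  ⋃ j : Fin ℓ, upsilon e ℓ (j.1 + 1) '' (B j)

/-- A partition, as a weakly decreasing eventually-zero function ℕ → ℕ
(the value at a being λ_{a+1}). -/
def IsPartitionFun (p : ℕ → ℕ) : Prop :=
  (∀ a b : ℕ, a ≤ b → p b ≤ p a) ∧ ∃ N, ∀ n, N ≤ n → p n = 0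

/-- β_t(λ) = {λ_a + t − a : a ≥ 1}. -/
def betaOf (p : ℕ → ℕ) (t : ℤ) : Set ℤ :=
  {x : ℤ | ∃ a : ℕ, x = (p a : ℤ) + t - ((a : ℤ) + 1)}

-- β⁻¹(B): the unique partition λ with β_{s(B)}(λ) = B (junk value if none exists).
open Classical in
noncomputable def betaInv (B : Set ℤ) : ℕ → ℕ :=
  if h : ∃ p : ℕ → ℕ, IsPartitionFun p ∧ betaOf p (charge B) = B then h.choose
  else fun _ => 0

/-- U(β_t(λ)) for an ℓ-partition λ and multicharge t. -/
def uglovMulti (e ℓ : ℕ) (Λ : Fin ℓ → ℕ → ℕ) (t : Fin ℓ → ℤ) : Set ℤ :=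
  uglovU e ℓ (fun j => betaOf (Λ j) (t j))

/-- U(λ; t) = β⁻¹(U(β_t(λ))). -/
noncomputable def uglovPart (e ℓ : ℕ) (Λ : Fin ℓ → ℕ → ℕ) (t : Fin ℓ → ℤ) : ℕ → ℕ :=
  betaInv (uglovMulti e ℓ Λ t)

/-- core_e(λ; t) = β⁻¹(core_e(U(β_t(λ)))). -/
noncomputable def corePart (e ℓ : ℕ) (Λ : Fin ℓ → ℕ → ℕ) (t : Fin ℓ → ℤ) : ℕ → ℕ :=
  betaInv (coreSet e (uglovMulti e ℓ Λ t))

/-- wt_e(λ; t) = wt_e(U(β_t(λ))). -/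
noncomputable def wtPart (e ℓ : ℕ) (Λ : Fin ℓ → ℕ → ℕ) (t : Fin ℓ → ℤ) : ℕ :=
  wtSet e (uglovMulti e ℓ Λ t)

/-- t ∈ Ā_e^ℓ : t is weakly increasing with last entry at most first entry + e. -/
def memAbar (e : ℕ) {ℓ : ℕ} (t : Fin ℓ → ℤ) : Prop :=
  Monotone t ∧ ∀ i j : Fin ℓ, t j ≤ t i + (e : ℤ)

/-- t ∈ A_e^ℓ : t is weakly increasing with last entry at most first entry + e − 1. -/
def memA (e : ℕ) {ℓ : ℕ} (t : Fin ℓ → ℤ) : Prop :=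
  Monotone t ∧ ∀ i j : Fin ℓ, t j ≤ t i + (e : ℤ) - 1

/-- δ_i^t(λ) = Σ_j δ_i(β_{t_j}(λ^{(j)})). -/
noncomputable def deltaMulti (e ℓ : ℕ) (Λ : Fin ℓ → ℕ → ℕ) (t : Fin ℓ → ℤ) (i : ZMod e) : ℤ :=
  ∑ j : Fin ℓ, deltaOf e i (betaOf (Λ j) (t j))

/-- The Young diagram [λ] of an ℓ-partition, as a set of nodes (a, b, j). -/
def youngSet (ℓ : ℕ) (Λ : Fin ℓ → ℕ → ℕ) : Set (ℕ × ℕ × Fin ℓ) :=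
  {x | 1 ≤ x.1 ∧ 1 ≤ x.2.1 ∧ x.2.1 ≤ Λ x.2.2 (x.1 - 1)}

/-- The multiplicity of i ∈ ℤ/eℤ in the residue multiset res_e^t(λ). -/
noncomputable def resCount (e ℓ : ℕ) (Λ : Fin ℓ → ℕ → ℕ) (t : Fin ℓ → ℤ) (i : ZMod e) : ℕ :=
  {x : ℕ × ℕ × Fin ℓ | x ∈ youngSet ℓ Λ ∧
    (((x.2.1 : ℤ) - (x.1 : ℤ) + t x.2.2 : ℤ) : ZMod e) = i}.ncard

/-- The set of e-weights over the Ŵ_ℓ-orbit of (λ; t). -/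
noncomputable def orbitWeights (e ℓ : ℕ) (Λ : Fin ℓ → ℕ → ℕ) (t : Fin ℓ → ℤ) : Set ℕ :=
  {n : ℕ | ∃ σ : Equiv.Perm (Fin ℓ), ∃ v : Fin ℓ → ℤ,
    n = wtPart e ℓ (fun j => Λ (σ j)) (fun j => t (σ j) + (e : ℤ) * v j)}

/-!
Writing `x = a * e + i`, the beads of `B` counted positively by `δ_i` correspond to
`a ∈ B_i \ B'` and those counted negatively to `a ∈ B' \ B_i`, where `B' = {a | a * e + i - 1 ∈ B}`.
For two β-sets `C, D` one has `|C \ D| - |D \ C| = s(C) - s(D)`, because `s(C) = |C ∩ [m, ∞)| + m`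
for every sufficiently small `m`. Finally `B'` is `B_{i-1}` for `i > 0`, while for `i = 0` it is
`B_{e-1}` shifted up by one, which raises the charge by one.
-/

open Set

theorem Set.ncard_sdiff_sub_ncard_sdiff {α : Type*} {s t : Set α} (hs : s.Finite)
    (ht : t.Finite) : ((s \ t).ncard : ℤ) - (t \ s).ncard = s.ncard - t.ncard := by
  have hs' := ncard_inter_add_ncard_sdiff_eq_ncard s t hs
  have ht' := ncard_inter_add_ncard_sdiff_eq_ncard t s ht
  rw [inter_comm] at ht'
  omega

theorem IsBetaSet.bddAbove {B : Set ℤ} (hB : IsBetaSet B) : BddAbove B :=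
  let ⟨⟨m, _, hm⟩, _⟩ := hB
  ⟨m, hm⟩

theorem IsBetaSet.bddBelow_compl {B : Set ℤ} (hB : IsBetaSet B) : BddBelow Bᶜ :=
  let ⟨_, m, _, hm⟩ := hB
  ⟨m, hm⟩

theorem BddBelow.eventually_forall_lt_mem_of_compl {X : Set ℤ} (h : BddBelow Xᶜ) :
    ∀ᶠ m in Filter.atBot, ∀ x < m, x ∈ X := by
  obtain ⟨b, hb⟩ := h
  filter_upwards [Filter.eventually_le_atBot b] with m hm x hx
  exact by_contra fun hxX => (hb hxX).not_gt (hx.trans_le hm)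

theorem BddAbove.finite_inter_Ici {X : Set ℤ} (h : BddAbove X) (m : ℤ) : (X ∩ Ici m).Finite := by
  obtain ⟨M, hM⟩ := h
  exact (finite_Icc m M).subset fun x hx => ⟨hx.2, hM hx.1⟩

theorem charge_eq_ncard_inter_Ici_add {X : Set ℤ} (hX : BddAbove X) {m : ℤ} (hm0 : m ≤ 0)
    (hm : ∀ x < m, x ∈ X) : charge X = (X ∩ Ici m).ncard + m := by
  have hneg : {x : ℤ | x < 0} \ X = Ico m 0 \ X := by
    ext x
    simp only [mem_sdiff, mem_Ico]
    exact ⟨fun h => ⟨⟨not_lt.1 fun hx => h.2 (hm x hx), h.1⟩, h.2⟩, fun h => ⟨h.1.2, h.2⟩⟩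
  have hsplit : X ∩ Ici m = (Ico m 0 ∩ X) ∪ (X ∩ Ici 0) := by
    ext x
    by_cases hx : x ∈ X
    · simp only [hx, mem_inter_iff, mem_union, mem_Ici, mem_Ico, true_and, and_true]
      omega
    · simp [hx]
  have hdisj : Disjoint (Ico m 0 ∩ X) (X ∩ Ici 0) :=
    disjoint_left.2 fun x hx hx' => (not_lt.2 hx'.2) hx.1.2
  have hIco : ((Ico m 0).ncard : ℤ) = -m := by
    rw [← Finset.coe_Ico, ncard_coe_finset, Int.card_Ico_of_le _ _ hm0]
    ring
  have hcount := ncard_inter_add_ncard_sdiff_eq_ncard (Ico m 0) X (finite_Ico m 0)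
  change ((X ∩ Ici 0).ncard : ℤ) - ({x : ℤ | x < 0} \ X).ncard = _
  rw [hneg, hsplit, ncard_union_eq hdisj ((finite_Ico m 0).inter_of_left X) (hX.finite_inter_Ici 0)]
  push_cast
  omega

theorem charge_sub_charge {C D : Set ℤ} (hC : BddAbove C) (hC' : BddBelow Cᶜ) (hD : BddAbove D)
    (hD' : BddBelow Dᶜ) : charge C - charge D = ((C \ D).ncard : ℤ) - (D \ C).ncard := by
  obtain ⟨m, hm0, hCm, hDm⟩ := ((Filter.eventually_le_atBot 0).and
    (hC'.eventually_forall_lt_mem_of_compl.and hD'.eventually_forall_lt_mem_of_compl)).exists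
  have hcut {X Y : Set ℤ} (hY : ∀ x < m, x ∈ Y) : X \ Y = (X ∩ Ici m) \ (Y ∩ Ici m) := by
    ext x
    simp only [mem_sdiff, mem_inter_iff, mem_Ici]
    exact ⟨fun h => ⟨⟨h.1, not_lt.1 fun hx => h.2 (hY x hx)⟩, fun h' => h.2 h'.1⟩,
      fun h => ⟨h.1.1, fun hx => h.2 ⟨hx, h.1.2⟩⟩⟩
  rw [charge_eq_ncard_inter_Ici_add hC hm0 hCm, charge_eq_ncard_inter_Ici_add hD hm0 hDm,
    hcut hDm, hcut hCm, ncard_sdiff_sub_ncard_sdiff (hC.finite_inter_Ici m) (hD.finite_inter_Ici m)]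
  ring

theorem charge_shiftSet {X : Set ℤ} (hX : BddAbove X) (hX' : BddBelow Xᶜ) (k : ℤ) :
    charge (shiftSet X k) = charge X + k := by
  unfold shiftSet
  obtain ⟨m, hm0, hm⟩ :=
    ((Filter.eventually_le_atBot (min 0 (-k))).and hX'.eventually_forall_lt_mem_of_compl).exists
  have hshift : ∀ x < m + k, x ∈ (· + k) '' X :=
    fun x hx => ⟨x - k, hm _ (by omega), by ring⟩
  have hinj : Function.Injective fun x : ℤ => x + k := add_left_injective k
  rw [charge_eq_ncard_inter_Ici_add ((add_left_mono (a := k)).map_bddAbove hX) (by omega) hshift,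
    charge_eq_ncard_inter_Ici_add hX (by omega) hm, ← image_add_const_Ici,
    ← image_inter hinj, ncard_image_of_injective _ hinj]
  ring

def quotCompInt (e : ℕ) (B : Set ℤ) (c : ℤ) : Set ℤ := (fun a => a * (e : ℤ) + c) ⁻¹' B

section quotCompInt

variable {e : ℕ} {B : Set ℤ}

theorem quotCompInt_natCast (i : ℕ) : quotCompInt e B i = quotComp e B i := rfl

theorem bddAbove_quotCompInt (he : 0 < e) (hB : BddAbove B) (c : ℤ) :
    BddAbove (quotCompInt e B c) := by
  obtain ⟨M, hM⟩ := hB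
  have he' : (1 : ℤ) ≤ e := by exact_mod_cast he
  refine ⟨max 0 (M - c), fun a (ha : a * e + c ∈ B) => ?_⟩
  have hle : a * e + c ≤ M := hM ha
  rcases le_or_gt a 0 with h | h
  · exact h.trans (le_max_left _ _)
  · exact (le_max_right _ _).trans' (by nlinarith)

theorem bddBelow_compl_quotCompInt (he : 0 < e) (hB : BddBelow Bᶜ) (c : ℤ) :
    BddBelow (quotCompInt e B c)ᶜ := by
  obtain ⟨m, hm⟩ := hB
  have he' : (1 : ℤ) ≤ e := by exact_mod_cast he
  refine ⟨min 0 (m - c), fun a (ha : a * e + c ∉ B) => ?_⟩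
  have hle : m ≤ a * e + c := hm ha
  rcases le_or_gt 0 a with h | h
  · exact (min_le_left _ _).trans h
  · exact (min_le_right _ _).trans (by nlinarith)

theorem quotCompInt_sub_self (c : ℤ) :
    quotCompInt e B (c - e) = shiftSet (quotCompInt e B c) 1 := by
  ext a
  have hshift (a : ℤ) : a * e + (c - e) = (a - 1) * e + c := by ring
  refine ⟨fun (ha : a * e + (c - e) ∈ B) => ⟨a - 1, ?_, by ring⟩, ?_⟩
  · rwa [hshift] at ha
  · rintro ⟨a, ha : a * e + c ∈ B, rfl⟩
    change (a + 1) * e + (c - e) ∈ B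
    rwa [hshift, add_sub_cancel_right]

theorem ncard_setOf_intCast_eq_and (he : e ≠ 0) (c : ℤ) (p : ℤ → Prop) :
    {x : ℤ | (x : ZMod e) = c ∧ p x}.ncard = {a : ℤ | p (a * e + c)}.ncard := by
  have hinj : Function.Injective fun a : ℤ => a * e + c := fun a b h =>
    mul_right_cancel₀ (Int.natCast_ne_zero.2 he) (add_right_cancel h)
  rw [← ncard_image_of_injective {a : ℤ | p (a * e + c)} hinj]
  congr 1
  ext x
  simp only [mem_ofPred_eq, mem_image, ZMod.intCast_eq_intCast_iff_dvd_sub]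
  constructor
  · rintro ⟨⟨k, hk⟩, hp⟩
    exact ⟨-k, by rwa [show -k * e + c = x by linear_combination hk], by linear_combination hk⟩
  · rintro ⟨a, hp, rfl⟩
    exact ⟨⟨-a, by ring⟩, hp⟩

theorem deltaOf_intCast (he : e ≠ 0) (c : ℤ) :
    deltaOf e c B = ((quotCompInt e B c \ quotCompInt e B (c - 1)).ncard : ℤ)
      - (quotCompInt e B (c - 1) \ quotCompInt e B c).ncard := by
  have hleft : {x : ℤ | x ∈ B ∧ (x : ZMod e) = c ∧ x - 1 ∉ B}
      = {x : ℤ | (x : ZMod e) = c ∧ (x ∈ B ∧ x - 1 ∉ B)} := by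
    ext; exact and_left_comm
  have hright : {x : ℤ | x ∈ B ∧ (x : ZMod e) = c - 1 ∧ x + 1 ∉ B}
      = {x : ℤ | (x : ZMod e) = ((c - 1 : ℤ) : ZMod e) ∧ (x ∈ B ∧ x + 1 ∉ B)} := by
    ext; push_cast; exact and_left_comm
  rw [deltaOf, hleft, hright, ncard_setOf_intCast_eq_and he, ncard_setOf_intCast_eq_and he]
  congr 3 <;> ext a <;>
    simp only [quotCompInt, mem_ofPred_eq, mem_sdiff, mem_preimage, add_sub_assoc, add_assoc,
      sub_add_cancel]

theorem deltaOf_intCast_eq_charge_sub (he : 0 < e) (hB : BddAbove B) (hB' : BddBelow Bᶜ)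
    (c : ℤ) : deltaOf e c B = charge (quotCompInt e B c) - charge (quotCompInt e B (c - 1)) := by
  rw [deltaOf_intCast he.ne', charge_sub_charge] <;>
    simp only [bddAbove_quotCompInt he hB, bddBelow_compl_quotCompInt he hB']

end quotCompInt

theorem stmt2_general (e : ℕ) (he : 2 ≤ e) (B : Set ℤ) (hB : IsBetaSet B) (i : ℕ) :
    deltaOf e (i : ZMod e) B =
      charge (quotComp e B i) - charge (quotComp e B (if i = 0 then e - 1 else i - 1))
        - (if i = 0 then 1 else 0) := by
  have he0 : 0 < e := by omega
  rw [← Int.cast_natCast, deltaOf_intCast_eq_charge_sub he0 hB.bddAbove hB.bddBelow_compl,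
    quotCompInt_natCast]
  rcases Nat.eq_zero_or_pos i with rfl | hpos
  · have hprev : ((0 : ℕ) : ℤ) - 1 = ((e - 1 : ℕ) : ℤ) - e := by omega
    rw [if_pos rfl, if_pos rfl, hprev, quotCompInt_sub_self,
      charge_shiftSet (bddAbove_quotCompInt he0 hB.bddAbove _)
        (bddBelow_compl_quotCompInt he0 hB.bddBelow_compl _), quotCompInt_natCast]
    ring
  · have hprev : (i : ℤ) - 1 = ((i - 1 : ℕ) : ℤ) := by omega
    rw [if_neg hpos.ne', if_neg hpos.ne', hprev, quotCompInt_natCast, sub_zero]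

/-- δ_i(B) = s(B_i) − s(B_{i−1}) − [i = 0], indices mod e. -/
theorem stmt2 (e : ℕ) (he : 2 ≤ e) (B : Set ℤ) (hB : IsBetaSet B) (i : ℕ) (hi : i < e) :
    deltaOf e (i : ZMod e) B =
      charge (quotComp e B i) - charge (quotComp e B (if i = 0 then e - 1 else i - 1))
        - (if i = 0 then 1 else 0) :=
  stmt2_general e he B hB i
end

section
/- Let B^{(1)}, …, B^{(ℓ)} be β-sets, let quot_e(U(B^{(1)}, …, B^{(ℓ)})) = (B_0, …, B_{e−1}) and quot_e(B^{(j)}) = (B^{(j)}_0, …, B^{(j)}_{e−1}) for each j ∈ {1, …, ℓ}. Then s(B_i) = Σ_{j=1}^{ℓ} s(B^{(j)}_i) for all i ∈ {0, …, e−1}; in particular, s(U(B^{(1)}, …, B^{(ℓ)})) = Σ_{j=1}^{ℓ} s(B^{(j)}). -/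
/-!
Charge is additive over residue classes: if `B` is a β-set and `n ≥ 1`, then
`s(B) = ∑_{r < n} s(B_r)` for the `n`-quotient `(B_r)`, since after truncating all sets below a
common ray each bead `an + r ∈ B` is counted once, as the bead `a ∈ B_r`.
Moreover the `ℓ`-quotient of the `i`-th `e`-quotient of `U(B^{(1)}, …, B^{(ℓ)})` is, at `r`,
the `i`-th `e`-quotient of `B^{(ℓ-r)}`, because `υ_j` places `ae + i` at `(aℓ + (ℓ - j))e + i`.
Additivity for `n = ℓ` gives the first claim; additivity for `n = e`, applied to `U` and to
each `B^{(j)}`, and an exchange of sums give the second.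
-/

lemma isBetaSet_iff {B : Set ℤ} : IsBetaSet B ↔ BddAbove B ∧ ∃ μ, Set.Iio μ ⊆ B := by
  constructor
  · rintro ⟨⟨m, -, hm⟩, ⟨μ, -, hμ⟩⟩
    refine ⟨⟨m, hm⟩, μ, fun x hx => ?_⟩
    by_contra hxB
    exact absurd (hμ x hxB) (not_le.mpr hx)
  · rintro ⟨⟨m, hm⟩, μ, hμ⟩
    have hμB : μ - 1 ∈ B := hμ (sub_one_lt μ)
    refine ⟨Int.exists_greatest_of_bdd ⟨m, hm⟩ ⟨_, hμB⟩, ?_⟩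
    refine Int.exists_least_of_bdd ⟨μ, fun x hx => ?_⟩ ⟨m + 1, fun h => ?_⟩
    · by_contra! hlt
      exact hx (hμ hlt)
    · have := hm h
      omega

lemma exists_uniform_bounds_of_isBetaSet {ι : Type*} [Finite ι] {C : ι → Set ℤ}
    (hC : ∀ r, IsBetaSet (C r)) : ∃ m μ : ℤ, ∀ r, C r ⊆ Set.Iic m ∧ Set.Iio μ ⊆ C r := by
  choose hm μ hμ using fun r => isBetaSet_iff.mp (hC r)
  choose m hm using hm
  obtain ⟨M, hM⟩ := Finite.exists_le m
  obtain ⟨N, hN⟩ := Finite.exists_ge μ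
  exact ⟨M, N, fun r => ⟨fun x hx => (hm r hx).trans (hM r),
    fun x hx => hμ r (lt_of_lt_of_le hx (hN r))⟩⟩

lemma mul_add_eq_mul_add_iff {n q q' b b' : ℤ} (hb : 0 ≤ b) (hbn : b < n) (hb' : 0 ≤ b')
    (hb'n : b' < n) : q * n + b = q' * n + b' ↔ q = q' ∧ b = b' := by
  refine ⟨fun h => ?_, fun ⟨hq, hb⟩ => hq ▸ hb ▸ rfl⟩
  have hn : 0 < n := hb.trans_lt hbn
  obtain ⟨hq, hr⟩ :=
    (Int.ediv_emod_unique (a := q * n + b) (q := q) (r := b) hn).mpr ⟨by ring, hb, hbn⟩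
  obtain ⟨hq', hr'⟩ :=
    (Int.ediv_emod_unique (a := q' * n + b') (q := q') (r := b') hn).mpr ⟨by ring, hb', hb'n⟩
  rw [h] at hq hr
  exact ⟨hq.symm.trans hq', hr.symm.trans hr'⟩

section Quotient

variable (e : ℕ) [NeZero e]

lemma ediv_mul_add_divModEquiv (x : ℤ) :
    x / e * e + (((Int.divModEquiv e x).2 : ℕ) : ℤ) = x := by
  simpa using (Int.divModEquiv e).symm_apply_apply x

lemma mem_iff_ediv_mem_quotComp (B : Set ℤ) (x : ℤ) :
    x ∈ B ↔ x / e ∈ quotComp e B (Int.divModEquiv e x).2 := by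
  show x ∈ B ↔ x / e * e + _ ∈ B
  rw [ediv_mul_add_divModEquiv]

lemma isBetaSet_iff_forall_quotComp {B : Set ℤ} :
    IsBetaSet B ↔ ∀ r : Fin e, IsBetaSet (quotComp e B r) := by
  have he : (0 : ℤ) < e := by exact_mod_cast Nat.pos_of_neZero e
  constructor
  · intro hB r
    obtain ⟨⟨m, hm⟩, μ, hμ⟩ := isBetaSet_iff.mp hB
    have hr : (0 : ℤ) ≤ (r : ℕ) ∧ ((r : ℕ) : ℤ) < e := ⟨by positivity, by exact_mod_cast r.isLt⟩
    refine isBetaSet_iff.mpr ⟨⟨m / e, fun a ha => ?_⟩, μ / e, fun a ha => ?_⟩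
    · have := hm ha
      exact (Int.le_ediv_iff_mul_le he).mpr (by linarith)
    · have := (Int.le_ediv_iff_mul_le he).mp (Int.add_one_le_of_lt ha)
      exact hμ (show a * e + (r : ℕ) < μ by linarith)
  · intro hB
    obtain ⟨m, μ, hmμ⟩ := exists_uniform_bounds_of_isBetaSet hB
    refine isBetaSet_iff.mpr ⟨⟨(m + 1) * e, fun x hx => ?_⟩, μ * e, fun x hx => ?_⟩
    · rw [mem_iff_ediv_mem_quotComp e] at hx
      exact ((Int.ediv_lt_iff_lt_mul he).mp (Int.lt_add_one_of_le ((hmμ _).1 hx))).le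
    · rw [mem_iff_ediv_mem_quotComp e]
      exact (hmμ _).2 ((Int.ediv_lt_iff_lt_mul he).mpr hx)

end Quotient

lemma charge_eq_ncard_inter_Ici_add_s6 {B : Set ℤ} {M : ℤ} (hM : M ≤ 0) (hlow : Set.Iio M ⊆ B)
    (hfin : (B ∩ Set.Ici M).Finite) : charge B = ((B ∩ Set.Ici M).ncard : ℤ) + M := by
  have hneg : {x : ℤ | x < 0} \ B = Set.Ico M 0 \ B := by
    ext x
    simp only [Set.mem_sdiff, Set.mem_ofPred_eq, Set.mem_Ico]
    exact ⟨fun ⟨hx, hxB⟩ => ⟨⟨not_lt.mp fun h => hxB (hlow h), hx⟩, hxB⟩,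
      fun ⟨⟨_, hx⟩, hxB⟩ => ⟨hx, hxB⟩⟩
  have hsplit : B ∩ Set.Ici M = (B ∩ {x | 0 ≤ x}) ∪ (Set.Ico M 0 ∩ B) := by
    ext x
    simp only [Set.mem_inter_iff, Set.mem_union, Set.mem_Ici, Set.mem_Ico, Set.mem_ofPred_eq]
    constructor
    · rintro ⟨hxB, hx⟩
      exact (le_or_gt 0 x).imp (⟨hxB, ·⟩) (⟨⟨hx, ·⟩, hxB⟩)
    · rintro (⟨hxB, hx⟩ | ⟨⟨hx, -⟩, hxB⟩)
      exacts [⟨hxB, hM.trans hx⟩, ⟨hxB, hx⟩]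
  have hdisj : Disjoint (B ∩ {x | 0 ≤ x}) (Set.Ico M 0 ∩ B) :=
    Set.disjoint_left.mpr fun x ⟨_, hx⟩ ⟨⟨_, hx'⟩, _⟩ => absurd hx (not_le.mpr hx')
  have hIco : (Set.Ico M 0 ∩ B).ncard + (Set.Ico M 0 \ B).ncard = (-M).toNat := by
    rw [Set.ncard_inter_add_ncard_sdiff_eq_ncard _ _ (Set.finite_Ico M 0), ← Finset.coe_Ico,
      Set.ncard_coe_finset, Int.card_Ico, zero_sub]
  have hunion := Set.ncard_union_eq hdisj (hfin.subset (hsplit ▸ Set.subset_union_left))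
    (hfin.subset (hsplit ▸ Set.subset_union_right))
  rw [charge, hneg, hsplit, hunion]
  omega

lemma inter_Ici_mul_eq_iUnion_image (e : ℕ) [NeZero e] (B : Set ℤ) (M : ℤ) :
    B ∩ Set.Ici (M * e) =
      ⋃ r : Fin e, (fun a => a * e + ((r : ℕ) : ℤ)) '' (quotComp e B r ∩ Set.Ici M) := by
  have he : (0 : ℤ) < e := by exact_mod_cast Nat.pos_of_neZero e
  ext x
  simp only [Set.mem_inter_iff, Set.mem_Ici, Set.mem_iUnion, Set.mem_image]
  constructor
  · rintro ⟨hx, hxM⟩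
    exact ⟨_, x / e, ⟨(mem_iff_ediv_mem_quotComp e B x).mp hx,
      (Int.le_ediv_iff_mul_le he).mpr hxM⟩, ediv_mul_add_divModEquiv e x⟩
  · rintro ⟨r, a, ⟨ha, haM⟩, rfl⟩
    exact ⟨ha, by nlinarith [(r : ℕ).cast_nonneg (α := ℤ)]⟩

lemma ncard_inter_Ici_mul_eq_sum (e : ℕ) [NeZero e] (B : Set ℤ) (M : ℤ)
    (hfin : ∀ r : Fin e, (quotComp e B r ∩ Set.Ici M).Finite) :
    (B ∩ Set.Ici (M * e)).ncard = ∑ r : Fin e, (quotComp e B r ∩ Set.Ici M).ncard := by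
  have hinj : ∀ r r' : Fin e, ∀ a a' : ℤ,
      a * e + ((r : ℕ) : ℤ) = a' * e + ((r' : ℕ) : ℤ) → a = a' ∧ r = r' := by
    intro r r' a a' h
    have hr := (mul_add_eq_mul_add_iff (by positivity) (by exact_mod_cast r.isLt)
      (by positivity) (by exact_mod_cast r'.isLt)).mp h
    exact ⟨hr.1, Fin.ext (by exact_mod_cast hr.2)⟩
  rw [inter_Ici_mul_eq_iUnion_image, Set.ncard_iUnion_of_finite (fun r => (hfin r).image _),
    finsum_eq_sum_of_fintype]
  · exact Finset.sum_congr rfl fun r _ =>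
      Set.ncard_image_of_injective _ fun a a' h => (hinj r r a a' h).1
  · intro r r' hrr'
    refine Set.disjoint_left.mpr ?_
    rintro _ ⟨a, -, rfl⟩ ⟨a', -, h⟩
    exact hrr' (hinj r' r a' a h).2.symm

theorem charge_eq_sum_charge_quotComp (e : ℕ) [NeZero e] {B : Set ℤ} (hB : IsBetaSet B) :
    charge B = ∑ r : Fin e, charge (quotComp e B r) := by
  have he : (0 : ℤ) < e := by exact_mod_cast Nat.pos_of_neZero e
  obtain ⟨m, μ, hmμ⟩ :=
    exists_uniform_bounds_of_isBetaSet ((isBetaSet_iff_forall_quotComp e).mp hB)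
  set M := min μ 0
  have hlow : ∀ r : Fin e, Set.Iio M ⊆ quotComp e B r :=
    fun r x (hx : x < M) => (hmμ r).2 (show x < μ from lt_of_lt_of_le hx (min_le_left _ _))
  have hfin : ∀ r : Fin e, (quotComp e B r ∩ Set.Ici M).Finite :=
    fun r => (Set.finite_Icc M m).subset fun a ⟨ha, haM⟩ => ⟨haM, (hmμ r).1 ha⟩
  have hlowB : Set.Iio (M * e) ⊆ B := fun x hx =>
    (mem_iff_ediv_mem_quotComp e B x).mpr (hlow _ ((Int.ediv_lt_iff_lt_mul he).mpr hx))
  have hfinB : (B ∩ Set.Ici (M * e)).Finite := by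
    rw [inter_Ici_mul_eq_iUnion_image]
    exact Set.finite_iUnion fun r => (hfin r).image _
  have hMe : M * e ≤ 0 := mul_nonpos_of_nonpos_of_nonneg (min_le_right _ _) he.le
  rw [charge_eq_ncard_inter_Ici_add_s6 hMe hlowB hfinB, ncard_inter_Ici_mul_eq_sum e B M hfin,
    Finset.sum_congr rfl fun r _ =>
      charge_eq_ncard_inter_Ici_add_s6 (min_le_right _ _) (hlow r) (hfin r)]
  simp only [Finset.sum_add_distrib, Finset.sum_const, Finset.card_univ, Fintype.card_fin,
    Nat.cast_sum, nsmul_eq_mul]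
  ring

lemma upsilon_eq (e ℓ j : ℕ) (x : ℤ) :
    upsilon e ℓ j x = (x / e * ℓ + ((ℓ : ℤ) - j)) * e + x % e := by
  rw [upsilon, Int.emod_def]
  ring

lemma mem_uglovU_iff {e ℓ : ℕ} (B : Fin ℓ → Set ℤ) (a : ℤ) (r : Fin ℓ) {i : ℕ} (hi : i < e) :
    (a * ℓ + ((r : ℕ) : ℤ)) * e + i ∈ uglovU e ℓ B ↔ a * e + i ∈ B r.rev := by
  have hi' : (0 : ℤ) ≤ i ∧ (i : ℤ) < e := ⟨by positivity, by exact_mod_cast hi⟩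
  have he : (0 : ℤ) < e := hi'.1.trans_lt hi'.2
  have hr : ((r.rev : ℕ) : ℤ) = ℓ - 1 - (r : ℕ) := by
    rw [Fin.val_rev]; omega
  simp only [uglovU, Set.mem_iUnion, Set.mem_image, upsilon_eq]
  constructor
  · rintro ⟨j, x, hx, h⟩
    obtain ⟨hq, hxi⟩ := (mul_add_eq_mul_add_iff (Int.emod_nonneg x he.ne')
      (Int.emod_lt_of_pos x he) hi'.1 hi'.2).mp h
    obtain ⟨hxa, hjr⟩ := (mul_add_eq_mul_add_iff (b := (ℓ : ℤ) - (j.1 + 1 : ℕ))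
      (by omega) (by omega) (by positivity) (by exact_mod_cast r.isLt)).mp hq
    obtain rfl : j = r.rev := Fin.ext (by omega)
    rwa [← hxa, ← hxi, Int.ediv_mul_add_emod]
  · intro h
    obtain ⟨hxa, hxi⟩ := (Int.ediv_emod_unique (a := a * e + i) (q := a) (r := i) he).mpr
      ⟨by ring, hi'⟩
    refine ⟨r.rev, _, h, ?_⟩
    rw [hxa, hxi, Nat.cast_succ, hr]
    ring

lemma quotComp_quotComp_uglovU {e : ℕ} (ℓ : ℕ) (B : Fin ℓ → Set ℤ) {i : ℕ} (hi : i < e)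
    (r : Fin ℓ) : quotComp ℓ (quotComp e (uglovU e ℓ B) i) r = quotComp e (B r.rev) i :=
  Set.ext fun a => mem_uglovU_iff B a r hi

section Uglov

variable {e : ℕ} (ℓ : ℕ) [NeZero ℓ] (B : Fin ℓ → Set ℤ) {i : ℕ}

lemma isBetaSet_quotComp_uglovU (hi : i < e) (hB : ∀ j, IsBetaSet (quotComp e (B j) i)) :
    IsBetaSet (quotComp e (uglovU e ℓ B) i) :=
  (isBetaSet_iff_forall_quotComp ℓ).mpr fun r => quotComp_quotComp_uglovU ℓ B hi r ▸ hB r.rev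

lemma charge_quotComp_uglovU (hi : i < e) (hB : ∀ j, IsBetaSet (quotComp e (B j) i)) :
    charge (quotComp e (uglovU e ℓ B) i) = ∑ j : Fin ℓ, charge (quotComp e (B j) i) := by
  rw [charge_eq_sum_charge_quotComp ℓ (isBetaSet_quotComp_uglovU ℓ B hi hB)]
  simp only [quotComp_quotComp_uglovU ℓ B hi]
  exact Equiv.sum_comp Fin.revPerm (fun j => charge (quotComp e (B j) i))

end Uglov

/-- the charges of the e-quotient components of U(B^{(1)}, …, B^{(ℓ)}) are the
sums of those of the B^{(j)}; in particular s(U(B^{(1)},…,B^{(ℓ)})) = Σ_j s(B^{(j)}). -/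
theorem stmt6 (e ℓ : ℕ) (he : 2 ≤ e) (hl : 1 ≤ ℓ) (B : Fin ℓ → Set ℤ)
    (hB : ∀ j, IsBetaSet (B j)) :
    (∀ i < e, charge (quotComp e (uglovU e ℓ B) i) = ∑ j : Fin ℓ, charge (quotComp e (B j) i)) ∧
      charge (uglovU e ℓ B) = ∑ j : Fin ℓ, charge (B j) := by
  have : NeZero e := ⟨by omega⟩
  have : NeZero ℓ := ⟨by omega⟩
  have hBquot (r : Fin e) (j : Fin ℓ) : IsBetaSet (quotComp e (B j) r) :=
    (isBetaSet_iff_forall_quotComp e).mp (hB j) r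
  have hU : IsBetaSet (uglovU e ℓ B) := (isBetaSet_iff_forall_quotComp e).mpr fun r =>
    isBetaSet_quotComp_uglovU ℓ B r.isLt (hBquot r)
  refine ⟨fun i hi => charge_quotComp_uglovU ℓ B hi (hBquot ⟨i, hi⟩), ?_⟩
  calc charge (uglovU e ℓ B)
      = ∑ r : Fin e, charge (quotComp e (uglovU e ℓ B) r) := charge_eq_sum_charge_quotComp e hU
    _ = ∑ r : Fin e, ∑ j : Fin ℓ, charge (quotComp e (B j) r) :=
      Finset.sum_congr rfl fun r _ => charge_quotComp_uglovU ℓ B r.isLt (hBquot r)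
    _ = ∑ j : Fin ℓ, charge (B j) := by
      rw [Finset.sum_comm]
      exact Finset.sum_congr rfl fun j _ => (charge_eq_sum_charge_quotComp e (hB j)).symm
end

section
/- For any β-sets B^{(1)}, …, B^{(ℓ)} and any i ∈ ℤ/eℤ, δ_i(U(B^{(1)}, …, B^{(ℓ)})) = Σ_{j=1}^{ℓ} δ_i(B^{(j)}) + (ℓ − 1)·[i = 0], where [i = 0] equals 1 if i = 0 and 0 otherwise. -/
/-!
Let `S` be a β-set containing every integer below `-K` and none from `K - 1` on, with `e ∣ K`,
and let `c_r(S)` count the elements of `S ∩ [-K, K)` of residue `r`. Comparing run starts and run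
ends in the window shows `δ_i(S) = c_i(S) - c_{i-1}(S) - [i = 0]`; the correction is the element
`-K - 1 ∈ S`, of residue `-1`, that enters the window shifted by one.

The maps `υ_j` preserve residues and send the block `[ae, ae + e)` into its own slot of the block
`[aeℓ, aeℓ + eℓ)`, so `c_r(U)` over `[-eℓM, eℓM)` is the sum of the `c_r(B^{(j)})` over
`[-eM, eM)`. The single correction on the left against the `ℓ` corrections on the right leaves
`(ℓ - 1)[i = 0]`.
-/

open Finset

lemma Int.mul_add_lt_mul_iff {d q r N : ℤ} (hr : 0 ≤ r ∧ r < d) : d * q + r < d * N ↔ q < N := by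
  constructor
  · intro h
    by_contra! hN
    nlinarith
  · intro h
    nlinarith

lemma Int.emod_nonneg_and_lt (x : ℤ) {d : ℤ} (hd : 0 < d) : 0 ≤ x % d ∧ x % d < d :=
  ⟨Int.emod_nonneg x hd.ne', Int.emod_lt_of_pos x hd⟩

lemma Int.mul_add_ediv_emod {d q r : ℤ} (hr : 0 ≤ r ∧ r < d) :
    (d * q + r) / d = q ∧ (d * q + r) % d = r :=
  (Int.ediv_emod_unique (by omega)).2 ⟨by ring, hr⟩

lemma Int.mul_add_inj {d q q' r r' : ℤ} (hr : 0 ≤ r ∧ r < d) (hr' : 0 ≤ r' ∧ r' < d)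
    (h : d * q + r = d * q' + r') : q = q' ∧ r = r' := by
  obtain ⟨hq, hr⟩ := Int.mul_add_ediv_emod (q := q) hr
  obtain ⟨hq', hr'⟩ := Int.mul_add_ediv_emod (q := q') hr'
  rw [h] at hq hr
  exact ⟨hq.symm.trans hq', hr.symm.trans hr'⟩

section Upsilon

variable {e ℓ : ℕ}

lemma upsilon_succ_eq (j : Fin ℓ) (x : ℤ) :
    upsilon e ℓ (j + 1) x = e * ℓ * (x / e) + (e * j.rev + x % e) := by
  have hrev : ((j.rev : ℕ) : ℤ) = ℓ - ((j + 1 : ℕ) : ℤ) := by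
    have := Fin.val_rev j
    omega
  rw [upsilon, hrev, Int.emod_def]
  ring

lemma upsilon_succ_rem_bounds (he : 0 < e) (j : Fin ℓ) (x : ℤ) :
    0 ≤ e * (j.rev : ℤ) + x % e ∧ e * (j.rev : ℤ) + x % e < e * ℓ := by
  have hx := Int.emod_nonneg_and_lt x (by omega : (0 : ℤ) < e)
  have hj : (j.rev : ℤ) + 1 ≤ ℓ := by have := j.rev.2; omega
  constructor <;> nlinarith

lemma upsilon_succ_lt_iff (he : 0 < e) (j : Fin ℓ) (x N : ℤ) :
    upsilon e ℓ (j + 1) x < e * ℓ * N ↔ x < e * N := by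
  conv_rhs => rw [← Int.mul_ediv_add_emod x e]
  rw [upsilon_succ_eq, Int.mul_add_lt_mul_iff (upsilon_succ_rem_bounds he j x),
    Int.mul_add_lt_mul_iff (Int.emod_nonneg_and_lt x (by omega))]

lemma upsilon_succ_mem_Ico_iff (he : 0 < e) (j : Fin ℓ) (x M : ℤ) :
    upsilon e ℓ (j + 1) x ∈ Ico (-(e * ℓ * M)) (e * ℓ * M) ↔ x ∈ Ico (-(e * M)) (e * M) := by
  have hlo := upsilon_succ_lt_iff he j x (-M)
  have hhi := upsilon_succ_lt_iff he j x M
  simp only [mul_neg] at hlo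
  simp only [mem_Ico, ← not_lt, hlo, hhi]

lemma upsilon_succ_injective (he : 0 < e) {j j' : Fin ℓ} {x x' : ℤ}
    (h : upsilon e ℓ (j + 1) x = upsilon e ℓ (j' + 1) x') : j = j' ∧ x = x' := by
  rw [upsilon_succ_eq, upsilon_succ_eq] at h
  obtain ⟨hdiv, hrem⟩ := Int.mul_add_inj (upsilon_succ_rem_bounds he j x)
    (upsilon_succ_rem_bounds he j' x') h
  obtain ⟨hrev, hmod⟩ := Int.mul_add_inj (Int.emod_nonneg_and_lt x (by omega))
    (Int.emod_nonneg_and_lt x' (by omega)) hrem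
  refine ⟨Fin.rev_injective (Fin.ext (by exact_mod_cast hrev)), ?_⟩
  rw [← Int.mul_ediv_add_emod x e, ← Int.mul_ediv_add_emod x' e, hdiv, hmod]

lemma exists_upsilon_succ_eq (he : 0 < e) (hl : 0 < ℓ) (y : ℤ) :
    ∃ j : Fin ℓ, ∃ x, upsilon e ℓ (j + 1) x = y := by
  have hel : (0 : ℤ) < e * ℓ := by positivity
  set r := y % (e * ℓ)
  have hr := Int.emod_nonneg_and_lt y hel
  have hc : 0 ≤ r / e := Int.ediv_nonneg hr.1 (by omega)
  have hc' : r / e < ℓ := by rw [Int.ediv_lt_iff_lt_mul (by omega)]; linarith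
  let j : Fin ℓ := Fin.rev ⟨(r / e).toNat, by omega⟩
  have hj : (j.rev : ℤ) = r / e := by simp [j, hc]
  obtain ⟨hq, hm⟩ :=
    Int.mul_add_ediv_emod (q := y / (e * ℓ)) (Int.emod_nonneg_and_lt r (by omega : (0 : ℤ) < e))
  refine ⟨j, e * (y / (e * ℓ)) + r % e, ?_⟩
  rw [upsilon_succ_eq, hq, hm, hj, Int.mul_ediv_add_emod]
  exact Int.mul_ediv_add_emod y _

lemma intCast_upsilon (j : ℕ) (x : ℤ) : ((upsilon e ℓ j x : ℤ) : ZMod e) = x := by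
  simp [upsilon, ZMod.intCast_mod]

end Upsilon

section Uglov

variable {e ℓ : ℕ} {B : Fin ℓ → Set ℤ}

lemma upsilon_succ_mem_uglovU_iff (he : 0 < e) (j : Fin ℓ) (x : ℤ) :
    upsilon e ℓ (j + 1) x ∈ uglovU e ℓ B ↔ x ∈ B j := by
  simp only [uglovU, Set.mem_iUnion, Set.mem_image]
  constructor
  · rintro ⟨j', x', hx', h⟩
    obtain ⟨rfl, rfl⟩ := upsilon_succ_injective he h
    exact hx'
  · exact fun hx => ⟨j, x, hx, rfl⟩

lemma mem_uglovU_of_lt (he : 0 < e) (hl : 0 < ℓ) {M : ℤ} (hlo : ∀ j, ∀ x < -(e * M), x ∈ B j) :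
    ∀ y < -(e * ℓ * M), y ∈ uglovU e ℓ B := by
  intro y hy
  obtain ⟨j, x, rfl⟩ := exists_upsilon_succ_eq he hl y
  rw [upsilon_succ_mem_uglovU_iff he]
  refine hlo j x ?_
  have := (upsilon_succ_lt_iff he j x (-M)).1 (by linarith)
  linarith

lemma lt_of_mem_uglovU (he : 0 < e) {N : ℤ} (hhi : ∀ j, ∀ x ∈ B j, x < e * N) :
    ∀ y ∈ uglovU e ℓ B, y < e * ℓ * N := by
  simp only [uglovU, Set.mem_iUnion, Set.mem_image]
  rintro y ⟨j, x, hx, rfl⟩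
  exact (upsilon_succ_lt_iff he j x N).2 (hhi j x hx)

end Uglov

open Classical in
noncomputable def windowCount (e : ℕ) (S : Set ℤ) (c : ZMod e) (K : ℤ) : ℕ :=
  #{x ∈ Ico (-K) K | x ∈ S ∧ (x : ZMod e) = c}

lemma windowCount_uglovU {e ℓ : ℕ} (he : 0 < e) (B : Fin ℓ → Set ℤ) (c : ZMod e) (M : ℤ) :
    windowCount e (uglovU e ℓ B) c (e * ℓ * M) = ∑ j, windowCount e (B j) c (e * M) := by
  classical
  simp only [windowCount]
  rw [← card_sigma]
  refine (card_nbij (fun p => upsilon e ℓ (p.1 + 1) p.2) ?_ ?_ ?_).symm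
  · rintro ⟨j, x⟩ hp
    simp only [mem_coe, mem_sigma, mem_univ, mem_filter, true_and] at hp
    simp only [mem_coe, mem_filter, upsilon_succ_mem_Ico_iff he, upsilon_succ_mem_uglovU_iff he,
      intCast_upsilon, hp, and_self]
  · rintro ⟨j, x⟩ - ⟨j', x'⟩ - h
    obtain ⟨rfl, rfl⟩ := upsilon_succ_injective he h
    rfl
  · intro y hy
    simp only [mem_coe, mem_filter, uglovU, Set.mem_iUnion, Set.mem_image] at hy
    obtain ⟨hyW, ⟨j, x, hx, rfl⟩, hyc⟩ := hy
    rw [upsilon_succ_mem_Ico_iff he] at hyW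
    rw [intCast_upsilon] at hyc
    refine ⟨⟨j, x⟩, ?_, rfl⟩
    simp only [mem_coe, mem_sigma, mem_univ, mem_filter, true_and]
    exact ⟨hyW, hx, hyc⟩

section Delta

variable {e : ℕ} {S : Set ℤ} {K : ℤ}

open Classical in
lemma deltaOf_eq_card_sub_card (hlo : ∀ x < -K, x ∈ S) (hhi : ∀ x ∈ S, x < K - 1) (i : ZMod e) :
    deltaOf e i S = (#{x ∈ Ico (-K) K | x ∈ S ∧ ((x : ℤ) : ZMod e) = i ∧ x - 1 ∉ S} : ℤ)
      - #{x ∈ Ico (-K) K | x - 1 ∈ S ∧ ((x : ℤ) : ZMod e) = i ∧ x ∉ S} := by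
  have hstart : {x | x ∈ S ∧ ((x : ℤ) : ZMod e) = i ∧ x - 1 ∉ S}
      = ↑{x ∈ Ico (-K) K | x ∈ S ∧ ((x : ℤ) : ZMod e) = i ∧ x - 1 ∉ S} := by
    ext x
    simp only [Set.mem_ofPred_eq, coe_filter, mem_Ico]
    refine ⟨fun ⟨hx, hxi, hx1⟩ => ⟨⟨?_, ?_⟩, hx, hxi, hx1⟩, And.right⟩
    · by_contra! h
      exact hx1 (hlo _ (by omega))
    · linarith [hhi x hx]
  have hend : {x | x ∈ S ∧ ((x : ℤ) : ZMod e) = i - 1 ∧ x + 1 ∉ S}.ncard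
      = #{x ∈ Ico (-K) K | x - 1 ∈ S ∧ ((x : ℤ) : ZMod e) = i ∧ x ∉ S} := by
    rw [← Set.ncard_image_of_injective _ (add_left_injective 1), ← Set.ncard_coe_finset]
    congr 1
    ext x
    simp only [Set.image_add_right, Set.mem_preimage, Set.mem_ofPred_eq, coe_filter, mem_Ico,
      ← sub_eq_add_neg, sub_add_cancel, Int.cast_sub, Int.cast_one, sub_left_inj]
    refine ⟨fun ⟨hx, hxi, hx1⟩ => ⟨⟨?_, ?_⟩, hx, hxi, hx1⟩, And.right⟩
    · by_contra! h
      exact hx1 (hlo _ h)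
    · linarith [hhi _ hx]
  rw [deltaOf, hstart, hend, Set.ncard_coe_finset]

open Classical in
lemma card_filter_sub_one_mem (hK : (K : ZMod e) = 0) (hlo : -K - 1 ∈ S) (hhi : K - 1 ∉ S)
    (hKpos : 0 < K) (c : ZMod e) :
    #{x ∈ Ico (-K) K | x - 1 ∈ S ∧ ((x : ℤ) : ZMod e) = c}
      = windowCount e S (c - 1) K + if c = 0 then 1 else 0 := by
  have hshift : Ico (-K) K = (Ico (-K - 1) (K - 1)).map (addRightEmbedding 1) := by
    rw [map_add_right_Ico, sub_add_cancel, sub_add_cancel]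
  have hpred : ∀ y, ((fun x => x - 1 ∈ S ∧ ((x : ℤ) : ZMod e) = c) ∘ addRightEmbedding 1) y
      ↔ y ∈ S ∧ ((y : ℤ) : ZMod e) = c - 1 := by
    simp [eq_sub_iff_add_eq]
  have hres : ((-K - 1 : ℤ) : ZMod e) = c - 1 ↔ c = 0 := by
    push_cast [hK]
    rw [neg_zero, zero_sub, ← zero_sub, sub_left_inj, eq_comm]
  rw [hshift, filter_map, card_map, filter_congr (fun y _ => hpred y), windowCount,
    ← insert_Ico_left_eq_Ico_sub_one (by omega : -K ≤ K - 1),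
    ← insert_Ico_sub_one_right_eq_Ico (by omega : -K < K), filter_insert, filter_insert,
    if_neg (show ¬(K - 1 ∈ S ∧ _) from fun h => hhi h.1)]
  by_cases hc : c = 0
  · rw [if_pos (show -K - 1 ∈ S ∧ _ from ⟨hlo, hres.2 hc⟩), card_insert_of_notMem (by simp),
      if_pos hc]
  · rw [if_neg (show ¬(-K - 1 ∈ S ∧ _) from fun h => hc (hres.1 h.2)), if_neg hc, add_zero]

open Classical in
lemma deltaOf_eq_windowCount (hK : (K : ZMod e) = 0) (hlo : ∀ x < -K, x ∈ S)
    (hhi : ∀ x ∈ S, x < K - 1) (i : ZMod e) :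
    deltaOf e i S = (windowCount e S i K : ℤ) - windowCount e S (i - 1) K
      - if i = 0 then 1 else 0 := by
  have hKpos : 0 < K := by linarith [hhi _ (hlo (-K - 1) (by omega))]
  -- pointwise, `[x ∈ S ∧ x - 1 ∉ S] + [x - 1 ∈ S] = [x ∈ S] + [x - 1 ∈ S ∧ x ∉ S]`
  have hcount : #{x ∈ Ico (-K) K | x ∈ S ∧ ((x : ℤ) : ZMod e) = i ∧ x - 1 ∉ S}
        + #{x ∈ Ico (-K) K | x - 1 ∈ S ∧ ((x : ℤ) : ZMod e) = i}
      = windowCount e S i K + #{x ∈ Ico (-K) K | x - 1 ∈ S ∧ ((x : ℤ) : ZMod e) = i ∧ x ∉ S} := by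
    simp only [windowCount, card_filter, ← sum_add_distrib]
    refine sum_congr rfl fun x _ => ?_
    by_cases hx : x ∈ S <;> by_cases hx1 : x - 1 ∈ S <;> by_cases hxi : ((x : ℤ) : ZMod e) = i <;>
      simp [hx, hx1, hxi]
  rw [card_filter_sub_one_mem hK (hlo _ (by omega)) (fun h => by linarith [hhi _ h]) hKpos]
    at hcount
  rw [deltaOf_eq_card_sub_card hlo hhi]
  split_ifs at hcount ⊢ <;> omega

end Delta

lemma IsBetaSet.eventually_window {B : Set ℤ} (hB : IsBetaSet B) {d : ℤ} (hd : 0 < d) :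
    ∀ᶠ M in Filter.atTop, (∀ x < -(d * M), x ∈ B) ∧ ∀ x ∈ B, x < d * (M - 1) := by
  obtain ⟨⟨m, -, hm⟩, n, -, hn⟩ := hB
  filter_upwards [Filter.eventually_ge_atTop (-n), Filter.eventually_ge_atTop (m + 2),
    Filter.eventually_ge_atTop 1] with M hMn hMm hM1
  refine ⟨fun x hx => ?_, fun x hx => ?_⟩
  · by_contra hxB
    nlinarith [hn x hxB]
  · nlinarith [hm x hx]

/-- δ_i(U(B^{(1)}, …, B^{(ℓ)})) = Σ_j δ_i(B^{(j)}) + (ℓ − 1)·[i = 0]. -/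
theorem stmt7 (e ℓ : ℕ) (he : 2 ≤ e) (hl : 1 ≤ ℓ) (B : Fin ℓ → Set ℤ)
    (hB : ∀ j, IsBetaSet (B j)) (i : ZMod e) :
    deltaOf e i (uglovU e ℓ B) =
      (∑ j : Fin ℓ, deltaOf e i (B j)) + ((ℓ : ℤ) - 1) * (if i = 0 then 1 else 0) := by
  have he0 : 0 < e := by omega
  obtain ⟨M, hM⟩ := (Filter.eventually_all.2 fun j => (hB j).eventually_window
    (by positivity : (0 : ℤ) < e)).exists
  have hBj : ∀ j, deltaOf e i (B j) = (windowCount e (B j) i (e * M) : ℤ)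
      - windowCount e (B j) (i - 1) (e * M) - if i = 0 then 1 else 0 := fun j =>
    deltaOf_eq_windowCount (by simp) (hM j).1 (fun x hx => by nlinarith [(hM j).2 x hx]) i
  have hU := deltaOf_eq_windowCount (K := e * ℓ * M) (by simp)
    (mem_uglovU_of_lt he0 hl fun j => (hM j).1)
    (fun y hy => by nlinarith [lt_of_mem_uglovU he0 (fun j => (hM j).2) y hy]) i
  rw [hU, windowCount_uglovU he0, windowCount_uglovU he0, sum_congr rfl fun j _ => hBj j]
  simp only [sum_sub_distrib, sum_const, card_univ, Fintype.card_fin, nsmul_eq_mul]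
  push_cast
  ring
end

section
/- Assume ℓ ≥ 2. Let λ = (λ^{(1)}, …, λ^{(ℓ)}) be an ℓ-partition and t = (t_1, …, t_ℓ) ∈ ℤ^ℓ a multicharge. Then for every j ∈ {1, …, ℓ}, core_e(λ; t + e·e_j) = core_e(λ; t), where e_j ∈ ℤ^ℓ is the j-th standard basis vector; and for every k ∈ {1, …, ℓ−1}, core_e(λ^{s_k}; t^{s_k}) = core_e(λ; t), where λ^{s_k} and t^{s_k} are obtained from λ and t by interchanging the k-th and (k+1)-th components. -/
/-!
The `e`-core of a β-set only depends on the charges of its `e`-quotient components. Each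
quotient component of the Uglov set `U(β_t(λ))` interleaves the corresponding quotient
components of the `β_{t_j}(λ^{(j)})`, so its charge is the sum of theirs. Adding `e` to `t_j`
shifts one summand by one bead, so every quotient charge rises by `1`: the core is shifted by
`e`, which `β⁻¹` does not see. Permuting the components only permutes the summands.
-/

lemma mem_shiftSet {B : Set ℤ} {k x : ℤ} : x ∈ shiftSet B k ↔ x - k ∈ B :=
  ⟨fun ⟨y, hy, hyx⟩ => by rwa [← hyx, add_sub_cancel_right],
    fun h => ⟨x - k, h, sub_add_cancel x k⟩⟩

lemma shiftSet_inj {B C : Set ℤ} {k : ℤ} : shiftSet B k = shiftSet C k ↔ B = C :=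
  (Set.image_injective.2 (add_left_injective k)).eq_iff

/-- A β-set up to nonemptiness: the condition making both counts in `charge` finite at every
base point. -/
def IsBetaBdd (B : Set ℤ) : Prop := BddAbove B ∧ BddBelow Bᶜ

namespace IsBetaBdd

variable {B : Set ℤ}

lemma finite_inter_Ici (h : IsBetaBdd B) (n : ℤ) : (B ∩ Set.Ici n).Finite := by
  obtain ⟨M, hM⟩ := h.1
  exact (Set.finite_Icc n M).subset fun x hx => ⟨hx.2, hM hx.1⟩

lemma finite_Iio_diff (h : IsBetaBdd B) (n : ℤ) : (Set.Iio n \ B).Finite := by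
  obtain ⟨m, hm⟩ := h.2
  exact (Set.finite_Ico m n).subset fun x hx => ⟨hm hx.2, hx.1⟩

lemma shiftSet (h : IsBetaBdd B) (k : ℤ) : IsBetaBdd (shiftSet B k) := by
  obtain ⟨⟨M, hM⟩, ⟨m, hm⟩⟩ := h
  refine ⟨⟨M + k, ?_⟩, ⟨m + k, fun x hx => ?_⟩⟩
  · rintro _ ⟨x, hx, rfl⟩
    exact add_le_add_left (hM hx) k
  · have : x - k ∈ Bᶜ := fun hxB => hx ⟨x - k, hxB, sub_add_cancel x k⟩
    linarith [hm this]

end IsBetaBdd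

lemma charge_eq_ncard_sub_ncard (B : Set ℤ) :
    charge B = (B ∩ Set.Ici 0).ncard - (Set.Iio 0 \ B).ncard :=
  rfl

lemma charge_eq_add_ncard_sub_ncard {B : Set ℤ} (h : IsBetaBdd B) (n : ℤ) :
    charge B = n + (B ∩ Set.Ici n).ncard - (Set.Iio n \ B).ncard := by
  -- lowering the base point from `n + 1` to `n` moves `n` from one count to the other
  have base_succ (n : ℤ) :
      (n + 1) + ((B ∩ Set.Ici (n + 1)).ncard : ℤ) - (Set.Iio (n + 1) \ B).ncard =
        n + (B ∩ Set.Ici n).ncard - (Set.Iio n \ B).ncard := by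
    by_cases hn : n ∈ B
    · have hIci : B ∩ Set.Ici n = insert n (B ∩ Set.Ici (n + 1)) := by
        ext x; simp only [Set.mem_inter_iff, Set.mem_Ici, Set.mem_insert_iff]; grind
      have hIio : Set.Iio (n + 1) \ B = Set.Iio n \ B := by
        ext x; simp only [Set.mem_sdiff, Set.mem_Iio]; grind
      rw [hIci, hIio, Set.ncard_insert_of_notMem (by simp) (h.finite_inter_Ici _)]
      push_cast; ring
    · have hIci : B ∩ Set.Ici (n + 1) = B ∩ Set.Ici n := by
        ext x; simp only [Set.mem_inter_iff, Set.mem_Ici]; grind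
      have hIio : Set.Iio (n + 1) \ B = insert n (Set.Iio n \ B) := by
        ext x; simp only [Set.mem_sdiff, Set.mem_Iio, Set.mem_insert_iff]; grind
      rw [hIci, hIio, Set.ncard_insert_of_notMem (by simp) (h.finite_Iio_diff _)]
      push_cast; ring
  induction n using Int.induction_on with
  | zero => rw [charge_eq_ncard_sub_ncard, zero_add]
  | succ i ih => rw [base_succ, ih]
  | pred i ih => rw [ih, ← base_succ (-i - 1), sub_add_cancel]

lemma charge_shiftSet_s10 {B : Set ℤ} (h : IsBetaBdd B) (k : ℤ) :
    charge (shiftSet B k) = charge B + k := by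
  have hinj : Function.Injective (fun x : ℤ => x + k) := add_left_injective k
  have hIci : shiftSet B k ∩ Set.Ici (0 + k) = (· + k) '' (B ∩ Set.Ici 0) := by
    rw [Set.image_inter hinj, Set.image_add_const_Ici, shiftSet]
  have hIio : Set.Iio (0 + k) \ shiftSet B k = (· + k) '' (Set.Iio 0 \ B) := by
    rw [Set.image_sdiff hinj, Set.image_add_const_Iio, shiftSet]
  rw [charge_eq_add_ncard_sub_ncard (h.shiftSet k) (0 + k), charge_eq_add_ncard_sub_ncard h 0,
    hIci, hIio, Set.ncard_image_of_injective _ hinj, Set.ncard_image_of_injective _ hinj]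
  ring

lemma betaOf_add (p : ℕ → ℕ) (t k : ℤ) : betaOf p (t + k) = shiftSet (betaOf p t) k := by
  ext x
  simp only [betaOf, mem_shiftSet, Set.mem_ofPred_eq]
  exact exists_congr fun a => by constructor <;> intro h <;> linarith

lemma isBetaBdd_betaOf {p : ℕ → ℕ} (hp : IsPartitionFun p) (t : ℤ) :
    IsBetaBdd (betaOf p t) := by
  obtain ⟨hmono, N, hN⟩ := hp
  refine ⟨⟨(p 0 : ℤ) + t, ?_⟩, ⟨t - N, fun x hx => ?_⟩⟩
  · rintro _ ⟨a, rfl⟩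
    have := hmono 0 a a.zero_le
    omega
  · by_contra hlt
    apply hx
    refine ⟨(t - x - 1).toNat, ?_⟩
    rw [hN _ (by omega)]
    omega

lemma betaInv_shiftSet {B : Set ℤ} (h : IsBetaBdd B) (k : ℤ) :
    betaInv (shiftSet B k) = betaInv B := by
  have hpred : (fun p => IsPartitionFun p ∧ betaOf p (charge (shiftSet B k)) = shiftSet B k) =
      fun p => IsPartitionFun p ∧ betaOf p (charge B) = B := by
    funext p
    rw [charge_shiftSet_s10 h, betaOf_add, shiftSet_inj]
  unfold betaInv
  rw [hpred]

lemma quotComp_shiftSet_mul (e : ℕ) (B : Set ℤ) (i : ℕ) (c : ℤ) :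
    quotComp e (shiftSet B (e * c)) i = shiftSet (quotComp e B i) c := by
  ext a
  simp only [quotComp, mem_shiftSet, Set.mem_ofPred_eq]
  rw [show a * e + i - e * c = (a - c) * e + i by ring]

lemma IsBetaBdd.quotComp {e : ℕ} (he : 0 < e) {B : Set ℤ} (h : IsBetaBdd B) (i : ℕ) :
    IsBetaBdd (quotComp e B i) := by
  obtain ⟨⟨M, hM⟩, ⟨m, hm⟩⟩ := h
  have he' : (1 : ℤ) ≤ e := by exact_mod_cast he
  have hi : (0 : ℤ) ≤ i := by positivity
  refine ⟨⟨|M|, fun a ha => ?_⟩, ⟨-|m| - i, fun a ha => ?_⟩⟩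
  · have := hM ha
    rcases le_or_gt a 0 with ha0 | ha0
    · exact ha0.trans (abs_nonneg M)
    · nlinarith [le_abs_self M]
  · have := hm ha
    rcases le_or_gt 0 a with ha0 | ha0
    · linarith [abs_nonneg m]
    · nlinarith [neg_abs_le m]

lemma coreSet_eq_shiftSet {e : ℕ} {B B' : Set ℤ} (c : ℤ)
    (h : ∀ i < e, charge (quotComp e B' i) = charge (quotComp e B i) + c) :
    coreSet e B' = shiftSet (coreSet e B) (c * e) := by
  ext x
  simp only [coreSet, mem_shiftSet, Set.mem_ofPred_eq]
  constructor
  · rintro ⟨i, hi, a, ha, rfl⟩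
    exact ⟨i, hi, a - c, by linarith [h i hi], by ring⟩
  · rintro ⟨i, hi, a, ha, hx⟩
    exact ⟨i, hi, a + c, by linarith [h i hi], by linear_combination hx⟩

lemma isBetaBdd_coreSet {e : ℕ} (he : 0 < e) (B : Set ℤ) : IsBetaBdd (coreSet e B) := by
  obtain ⟨S, hS⟩ := ((Set.finite_Iio e).image fun i => |charge (quotComp e B i)|).bddAbove
  have hcharge (i : ℕ) (hi : i < e) : |charge (quotComp e B i)| ≤ S := hS ⟨i, hi, rfl⟩
  have he' : (0 : ℤ) < e := by exact_mod_cast he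
  refine ⟨⟨S * e, ?_⟩, ⟨-S * e, fun x hx => ?_⟩⟩
  · rintro _ ⟨i, hi, a, ha, rfl⟩
    have hie : (i : ℤ) < e := by exact_mod_cast hi
    nlinarith [le_abs_self (charge (quotComp e B i)), hcharge i hi]
  · have hr := Int.emod_nonneg x he'.ne'
    have hre := Int.emod_lt_of_pos x he'
    have hx_eq := Int.ediv_mul_add_emod x e
    by_contra hlt
    refine hx ⟨(x % e).toNat, by omega, x / e, ?_, by rw [Int.toNat_of_nonneg hr, hx_eq]⟩
    by_contra hq
    have := hcharge _ (show (x % e).toNat < e by omega)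
    nlinarith [neg_abs_le (charge (quotComp e B (x % e).toNat))]

lemma betaInv_coreSet_eq {e : ℕ} (he : 0 < e) {B B' : Set ℤ} (c : ℤ)
    (h : ∀ i < e, charge (quotComp e B' i) = charge (quotComp e B i) + c) :
    betaInv (coreSet e B') = betaInv (coreSet e B) := by
  rw [coreSet_eq_shiftSet c h, betaInv_shiftSet (isBetaBdd_coreSet he B)]

lemma Int.mul_add_eq_mul_add_iff {L q q' c c' : ℤ} (hc : 0 ≤ c) (hcL : c < L) (hc' : 0 ≤ c')
    (hc'L : c' < L) : q * L + c = q' * L + c' ↔ q = q' ∧ c = c' := by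
  refine ⟨fun h => ?_, fun ⟨hq, hc⟩ => hq ▸ hc ▸ rfl⟩
  have hL : 0 < L := hc.trans_lt hcL
  obtain ⟨hq, hr⟩ := (Int.ediv_emod_unique (a := q * L + c) (q := q) hL).2 ⟨by ring, hc, hcL⟩
  obtain ⟨hq', hr'⟩ :=
    (Int.ediv_emod_unique (a := q' * L + c') (q := q') hL).2 ⟨by ring, hc', hc'L⟩
  rw [h] at hq hr
  exact ⟨hq.symm.trans hq', hr.symm.trans hr'⟩

/-- For `0 ≤ r < e`, `υ_{j+1}(qe + r) = (interleave ℓ j q) e + r` (`j : Fin ℓ` being 0-indexed):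
`υ_{j+1}` acts on every quotient component through `interleave ℓ j`. -/
def interleave (ℓ : ℕ) (j : Fin ℓ) (q : ℤ) : ℤ := q * ℓ + (ℓ - 1 - j)

section Interleave

variable {ℓ : ℕ}

lemma interleave_offset_nonneg (j : Fin ℓ) : 0 ≤ (ℓ : ℤ) - 1 - j := by
  have := j.isLt; omega

lemma interleave_offset_lt (j : Fin ℓ) : (ℓ : ℤ) - 1 - j < ℓ := by
  omega

lemma interleave_eq_interleave_iff {j k : Fin ℓ} {q r : ℤ} :
    interleave ℓ j q = interleave ℓ k r ↔ j = k ∧ q = r := by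
  rw [interleave, interleave, Int.mul_add_eq_mul_add_iff (interleave_offset_nonneg j)
    (interleave_offset_lt j) (interleave_offset_nonneg k) (interleave_offset_lt k), Fin.ext_iff]
  omega

lemma interleave_injective (j : Fin ℓ) : Function.Injective (interleave ℓ j) :=
  fun _ _ h => (interleave_eq_interleave_iff.1 h).2

lemma exists_interleave_eq (hℓ : 0 < ℓ) (x : ℤ) : ∃ j q, interleave ℓ j q = x := by
  have hℓ' : (0 : ℤ) < ℓ := by exact_mod_cast hℓ
  have hr := Int.emod_nonneg x hℓ'.ne'
  have hrℓ := Int.emod_lt_of_pos x hℓ'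
  refine ⟨⟨ℓ - 1 - (x % ℓ).toNat, by omega⟩, x / ℓ, ?_⟩
  have hoff : (ℓ : ℤ) - 1 - ((ℓ - 1 - (x % ℓ).toNat : ℕ) : ℤ) = x % ℓ := by omega
  rw [interleave, hoff, Int.ediv_mul_add_emod]

lemma interleave_nonneg_iff (j : Fin ℓ) (q : ℤ) : 0 ≤ interleave ℓ j q ↔ 0 ≤ q := by
  have h0 := interleave_offset_nonneg j
  have h1 := interleave_offset_lt j
  rw [interleave]
  exact ⟨fun h => by by_contra hq; nlinarith, fun h => by nlinarith⟩

lemma interleave_mem_iUnion_image_iff {D : Fin ℓ → Set ℤ} {j : Fin ℓ} {q : ℤ} :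
    interleave ℓ j q ∈ ⋃ k, interleave ℓ k '' D k ↔ q ∈ D j := by
  simp only [Set.mem_iUnion, Set.mem_image, interleave_eq_interleave_iff]
  constructor
  · rintro ⟨k, r, hr, rfl, rfl⟩
    exact hr
  · exact fun hq => ⟨j, q, hq, rfl, rfl⟩

lemma charge_iUnion_image_interleave (hℓ : 0 < ℓ) (D : Fin ℓ → Set ℤ)
    (hD : ∀ j, IsBetaBdd (D j)) : charge (⋃ j, interleave ℓ j '' D j) = ∑ j, charge (D j) := by
  have hdisj (S : Fin ℓ → Set ℤ) :
      Pairwise fun j k => Disjoint (interleave ℓ j '' S j) (interleave ℓ k '' S k) := by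
    refine fun j k hjk => Set.disjoint_left.2 ?_
    rintro _ ⟨q, -, rfl⟩ ⟨r, -, h⟩
    exact hjk (interleave_eq_interleave_iff.1 h).1.symm
  have hIci : (⋃ j, interleave ℓ j '' D j) ∩ Set.Ici 0 =
      ⋃ j, interleave ℓ j '' (D j ∩ Set.Ici 0) := by
    ext x
    obtain ⟨j, q, rfl⟩ := exists_interleave_eq hℓ x
    simp only [Set.mem_inter_iff, interleave_mem_iUnion_image_iff, Set.mem_Ici,
      interleave_nonneg_iff]
  have hIio : Set.Iio 0 \ (⋃ j, interleave ℓ j '' D j) =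
      ⋃ j, interleave ℓ j '' (Set.Iio 0 \ D j) := by
    ext x
    obtain ⟨j, q, rfl⟩ := exists_interleave_eq hℓ x
    simp only [Set.mem_sdiff, interleave_mem_iUnion_image_iff, Set.mem_Iio, ← not_le,
      interleave_nonneg_iff]
  rw [charge_eq_ncard_sub_ncard, hIci, hIio,
    Set.ncard_iUnion_of_finite (fun j => ((hD j).finite_inter_Ici 0).image _) (hdisj _),
    Set.ncard_iUnion_of_finite (fun j => ((hD j).finite_Iio_diff 0).image _) (hdisj _),
    finsum_eq_sum_of_fintype, finsum_eq_sum_of_fintype]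
  simp only [Set.ncard_image_of_injective _ (interleave_injective _), charge_eq_ncard_sub_ncard,
    Nat.cast_sum, ← Finset.sum_sub_distrib]

end Interleave

lemma upsilon_mul_add {e ℓ : ℕ} (j : Fin ℓ) {q r : ℤ} (hr : 0 ≤ r) (hre : r < e) :
    upsilon e ℓ (j + 1) (q * e + r) = interleave ℓ j q * e + r := by
  have hmod : (q * e + r) % e = r :=
    ((Int.ediv_emod_unique (q := q) (hr.trans_lt hre)).2 ⟨by ring, hr, hre⟩).2
  rw [upsilon, interleave, hmod]
  push_cast
  ring

lemma quotComp_image_upsilon {e ℓ i : ℕ} (hi : i < e) (j : Fin ℓ) (B : Set ℤ) :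
    quotComp e (upsilon e ℓ (j + 1) '' B) i = interleave ℓ j '' quotComp e B i := by
  have he : (0 : ℤ) < e := by omega
  have hi0 : (0 : ℤ) ≤ i := by positivity
  have hie : (i : ℤ) < e := by exact_mod_cast hi
  ext a
  constructor
  · rintro ⟨x, hx, hxa⟩
    rw [← Int.ediv_mul_add_emod x e,
      upsilon_mul_add j (Int.emod_nonneg x he.ne') (Int.emod_lt_of_pos x he),
      Int.mul_add_eq_mul_add_iff (Int.emod_nonneg x he.ne') (Int.emod_lt_of_pos x he) hi0 hie]
      at hxa
    refine ⟨x / e, ?_, hxa.1⟩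
    show x / e * e + i ∈ B
    rwa [← hxa.2, Int.ediv_mul_add_emod]
  · rintro ⟨q, hq, rfl⟩
    exact ⟨q * e + i, hq, upsilon_mul_add j hi0 hie⟩

lemma quotComp_uglovU {e ℓ i : ℕ} (hi : i < e) (B : Fin ℓ → Set ℤ) :
    quotComp e (uglovU e ℓ B) i = ⋃ j, interleave ℓ j '' quotComp e (B j) i := by
  simp only [← quotComp_image_upsilon hi]
  ext a
  simp [quotComp, uglovU]

section CorePart

variable {e ℓ : ℕ} {Λ : Fin ℓ → ℕ → ℕ}

lemma charge_quotComp_uglovMulti (hℓ : 0 < ℓ) (hΛ : ∀ j, IsPartitionFun (Λ j)) (t : Fin ℓ → ℤ)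
    {i : ℕ} (hi : i < e) :
    charge (quotComp e (uglovMulti e ℓ Λ t) i) =
      ∑ j, charge (quotComp e (betaOf (Λ j) (t j)) i) := by
  rw [uglovMulti, quotComp_uglovU hi, charge_iUnion_image_interleave hℓ _
    fun j => (isBetaBdd_betaOf (hΛ j) (t j)).quotComp (by omega) i]

theorem corePart_add_mul (he : 0 < e) (hℓ : 0 < ℓ) (hΛ : ∀ j, IsPartitionFun (Λ j))
    (t v : Fin ℓ → ℤ) : corePart e ℓ Λ (fun j => t j + e * v j) = corePart e ℓ Λ t := by
  refine betaInv_coreSet_eq he (∑ j, v j) fun i hi => ?_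
  rw [charge_quotComp_uglovMulti hℓ hΛ _ hi, charge_quotComp_uglovMulti hℓ hΛ _ hi,
    ← Finset.sum_add_distrib]
  refine Finset.sum_congr rfl fun j _ => ?_
  rw [betaOf_add, quotComp_shiftSet_mul,
    charge_shiftSet_s10 ((isBetaBdd_betaOf (hΛ j) (t j)).quotComp he i)]

theorem corePart_comp_perm (he : 0 < e) (hℓ : 0 < ℓ) (hΛ : ∀ j, IsPartitionFun (Λ j))
    (t : Fin ℓ → ℤ) (σ : Equiv.Perm (Fin ℓ)) :
    corePart e ℓ (fun j => Λ (σ j)) (fun j => t (σ j)) = corePart e ℓ Λ t := by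
  refine betaInv_coreSet_eq he 0 fun i hi => ?_
  rw [charge_quotComp_uglovMulti hℓ (fun j => hΛ (σ j)) _ hi,
    charge_quotComp_uglovMulti hℓ hΛ _ hi, add_zero]
  exact Equiv.sum_comp σ fun j => charge (quotComp e (betaOf (Λ j) (t j)) i)

end CorePart

/-- Here `s_k` is 0-indexed: it swaps the entries at positions `k` and `k + 1` of `Fin ℓ`. -/
theorem stmt10_general (e ℓ : ℕ) (he : 2 ≤ e) (Λ : Fin ℓ → ℕ → ℕ)
    (hΛ : ∀ j, IsPartitionFun (Λ j)) (t : Fin ℓ → ℤ) :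
    (∀ j : Fin ℓ,
      corePart e ℓ Λ (fun j' => t j' + if j' = j then (e : ℤ) else 0) = corePart e ℓ Λ t) ∧
    (∀ k : ℕ, ∀ hk : k + 1 < ℓ,
      corePart e ℓ
        (fun j => Λ (Equiv.swap (⟨k, Nat.lt_of_succ_lt hk⟩ : Fin ℓ) ⟨k + 1, hk⟩ j))
        (fun j => t (Equiv.swap (⟨k, Nat.lt_of_succ_lt hk⟩ : Fin ℓ) ⟨k + 1, hk⟩ j)) =
      corePart e ℓ Λ t) := by
  refine ⟨fun j => ?_, fun k hk => corePart_comp_perm (by omega) (by omega) hΛ t _⟩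
  simpa [mul_ite] using
    corePart_add_mul (by omega) j.pos hΛ t fun j' => if j' = j then 1 else 0

/-- core_e(λ; t + e·e_j) = core_e(λ; t) for every j, and
core_e(λ^{s_k}; t^{s_k}) = core_e(λ; t) for every adjacent transposition s_k
(0-indexed: s_k swaps the entries at positions k and k+1 of Fin ℓ). -/
theorem stmt10 (e ℓ : ℕ) (he : 2 ≤ e) (hl : 2 ≤ ℓ) (Λ : Fin ℓ → ℕ → ℕ)
    (hΛ : ∀ j, IsPartitionFun (Λ j)) (t : Fin ℓ → ℤ) :
    (∀ j : Fin ℓ,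
      corePart e ℓ Λ (fun j' => t j' + if j' = j then (e : ℤ) else 0) = corePart e ℓ Λ t) ∧
    (∀ k : ℕ, ∀ hk : k + 1 < ℓ,
      corePart e ℓ
        (fun j => Λ (Equiv.swap (⟨k, Nat.lt_of_succ_lt hk⟩ : Fin ℓ) ⟨k + 1, hk⟩ j))
        (fun j => t (Equiv.swap (⟨k, Nat.lt_of_succ_lt hk⟩ : Fin ℓ) ⟨k + 1, hk⟩ j)) =
      corePart e ℓ Λ t) :=
  stmt10_general e ℓ he Λ hΛ t
end

section
/- Let t = (t_1, …, t_ℓ) ∈ A_e^ℓ, let σ be a permutation of {1, …, ℓ} and v = (v_1, …, v_ℓ) ∈ ℤ^ℓ, and suppose t^{σv} := (t_{σ(1)} + e·v_1, …, t_{σ(ℓ)} + e·v_ℓ) ∈ Ā_e^ℓ. Then there exist a ∈ ℤ and b ∈ {0, 1, …, ℓ−1} such that v = v(a, b) and σ·ρ^{−b} lies in the subgroup of S_ℓ generated by the adjacent transpositions (k, k+1) for those k ∈ {1, …, ℓ−1} with t_k = t_{k+1}. -/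
/-! Since `t` spreads over less than `e` and `t^{σv}` over at most `e`, comparing entries of
`t^{σv}` shows that `v` is weakly increasing and takes at most the two values `a` and `a + 1`:
`v = v(a, b)`. The cycle `ρ^{-b}` moves the `b` positions carrying `a + 1` to the front, and the
two defining inequalities of `Ā_e^ℓ` then say that `t ∘ σρ^{-b}` is weakly increasing, hence
equal to `t`. A permutation fixing a monotone tuple only moves positions inside blocks of equal
entries, and such a block is connected by the adjacent transpositions `(k, k+1)` with
`t_k = t_{k+1}`. -/

open Equiv Finset MulAction

theorem coe_finRotate_inv_pow_apply {n b : ℕ} (hb : b ≤ n) (j : Fin n) :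
    (((finRotate n)⁻¹ ^ b) j : ℕ) = if j.1 < b then j + (n - b) else j - b := by
  induction b with
  | zero => simp
  | succ b ih =>
    cases n with
    | zero => exact j.elim0
    | succ m =>
      rw [pow_succ', Perm.mul_apply]
      generalize ((finRotate (m + 1))⁻¹ ^ b) j = x at ih
      rw [Perm.inv_def, finRotate_symm_apply, Fin.coe_sub_one]
      simp only [Fin.ext_iff, Fin.val_zero, ih (by omega)]
      split_ifs <;> omega

theorem Fin.val_lt_card_filter_iff {n : ℕ} {P : Fin n → Prop} [DecidablePred P]
    (hP : ∀ ⦃i j⦄, i ≤ j → P j → P i) (j : Fin n) :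
    j.1 < #{i | P i} ↔ P j := by
  constructor
  · intro hj
    by_contra hPj
    have : ({i | P i} : Finset (Fin n)) ⊆ Iio j := fun i hi => by
      simp only [mem_filter, mem_univ, true_and] at hi
      exact mem_Iio.2 (lt_of_not_ge fun hji => hPj (hP hji hi))
    simpa using (card_le_card this).trans_lt' hj
  · intro hPj
    have : Iic j ⊆ ({i | P i} : Finset (Fin n)) := fun i hi => by
      simpa using hP (mem_Iic.1 hi) hPj
    have hcard := card_le_card this
    rw [Fin.card_Iic] at hcard
    omega

section AdjacentSwaps

variable {n : ℕ} {α : Type*}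

def equalAdjSwaps (t : Fin n → α) : Set (Perm (Fin n)) :=
  {τ | ∃ k : ℕ, ∃ hk : k + 1 < n,
    t ⟨k, Nat.lt_of_succ_lt hk⟩ = t ⟨k + 1, hk⟩ ∧
    τ = swap ⟨k, Nat.lt_of_succ_lt hk⟩ ⟨k + 1, hk⟩}

theorem isSwap_of_mem_equalAdjSwaps {t : Fin n → α} {τ : Perm (Fin n)}
    (hτ : τ ∈ equalAdjSwaps t) : τ.IsSwap := by
  obtain ⟨k, hk, -, rfl⟩ := hτ
  exact ⟨_, _, by simp [Fin.ext_iff], rfl⟩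

variable [PartialOrder α] {t : Fin n → α}

theorem mem_orbit_closure_equalAdjSwaps (ht : Monotone t) {i j : Fin n} (hij : i ≤ j)
    (htij : t i = t j) : j ∈ orbit (Subgroup.closure (equalAdjSwaps t)) i := by
  obtain ⟨d, hd⟩ : ∃ d, j.1 = i.1 + d := ⟨j.1 - i.1, by rw [Fin.le_def] at hij; omega⟩
  induction d generalizing j with
  | zero => rw [show j = i from Fin.ext hd]; exact mem_orbit_self i
  | succ d ih =>
    have hk : i.1 + d + 1 < n := hd ▸ j.2
    obtain rfl : j = ⟨i.1 + d + 1, hk⟩ := Fin.ext hd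
    set k : Fin n := ⟨i.1 + d, Nat.lt_of_succ_lt hk⟩
    have hik : i ≤ k := by simp [Fin.le_def, k]
    have htk : t i = t k := le_antisymm (ht hik) (htij ▸ ht (by simp [Fin.le_def, k]))
    have hswap : swap k ⟨i.1 + d + 1, hk⟩ ∈ Subgroup.closure (equalAdjSwaps t) :=
      Subgroup.subset_closure ⟨i.1 + d, hk, htk.symm.trans htij, rfl⟩
    simpa using mem_orbit_of_mem_orbit ⟨_, hswap⟩ (ih hik htk rfl)

theorem mem_closure_equalAdjSwaps_of_comp_eq (ht : Monotone t) {π : Perm (Fin n)}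
    (hπ : t ∘ π = t) : π ∈ Subgroup.closure (equalAdjSwaps t) := by
  rw [mem_closure_isSwap fun _ => isSwap_of_mem_equalAdjSwaps]
  refine ⟨Set.toFinite _, fun x => ?_⟩
  have htx : t x = t (π x) := (congrFun hπ x).symm
  rcases le_total x (π x) with h | h
  · exact mem_orbit_closure_equalAdjSwaps ht h htx
  · exact mem_orbit_symm.1 (mem_orbit_closure_equalAdjSwaps ht h htx.symm)

end AdjacentSwaps

def stepVector (ℓ : ℕ) (a : ℤ) (b : ℕ) : Fin ℓ → ℤ :=
  fun j => if j.1 < ℓ - b then a else a + 1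

theorem exists_eq_stepVector {ℓ : ℕ} [NeZero ℓ] {v : Fin ℓ → ℤ} (hv : Monotone v)
    (hv0 : ∀ j, v j ≤ v 0 + 1) : ∃ b ≤ ℓ - 1, v = stepVector ℓ (v 0) b := by
  have hc : ∀ j : Fin ℓ, j.1 < #{i | v i = v 0} ↔ v j = v 0 :=
    Fin.val_lt_card_filter_iff fun i j hij hj =>
      le_antisymm (hj ▸ hv hij) (hv (Fin.zero_le i))
  have hc0 : 0 < #{i | v i = v 0} := (hc 0).2 rfl
  have hcℓ : #{i | v i = v 0} ≤ ℓ := (card_filter_le _ _).trans_eq (card_fin ℓ)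
  refine ⟨ℓ - #{i | v i = v 0}, by omega, funext fun j => ?_⟩
  rw [stepVector, show ℓ - (ℓ - #{i | v i = v 0}) = #{i | v i = v 0} by omega]
  split_ifs with hj
  · exact (hc j).1 hj
  · have := (hc j).not.1 hj
    have := hv (Fin.zero_le j)
    have := hv0 j
    omega

section Multicharges

variable {e ℓ : ℕ} {t : Fin ℓ → ℤ} {σ : Perm (Fin ℓ)} {v : Fin ℓ → ℤ}

theorem monotone_of_memA_of_memAbar (ht : memA e t) (h : memAbar e (fun j => t (σ j) + e * v j)) : Monotone v := by
  intro p q hpq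
  have h1 := h.1 hpq
  have h2 := ht.2 (σ p) (σ q)
  by_contra! hlt
  simp only at h1
  nlinarith

theorem le_add_one_of_memA_of_memAbar (ht : memA e t)
    (h : memAbar e (fun j => t (σ j) + e * v j)) (i j : Fin ℓ) :
    v j ≤ v i + 1 := by
  have h1 := h.2 i j
  have h2 := ht.2 (σ j) (σ i)
  by_contra! hlt
  simp only at h1
  nlinarith

theorem monotone_comp_finRotate_inv_pow {w : Fin ℓ → ℤ} {a : ℤ} {b : ℕ} (hb : b ≤ ℓ)
    (h : memAbar e (fun j => w j + e * stepVector ℓ a b j)) :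
    Monotone (w ∘ ⇑((finRotate ℓ)⁻¹ ^ b)) := by
  intro i j hij
  have hp := coe_finRotate_inv_pow_apply hb i
  have hq := coe_finRotate_inv_pow_apply hb j
  set p := ((finRotate ℓ)⁻¹ ^ b) i
  set q := ((finRotate ℓ)⁻¹ ^ b) j
  -- `(ρ⁻¹) ^ b` lists the positions where the step vector is `a + 1` before those where it is `a`
  have : (p ≤ q ∧ stepVector ℓ a b p = stepVector ℓ a b q) ∨
      stepVector ℓ a b p = stepVector ℓ a b q + 1 := by
    rw [Fin.le_def] at hij ⊢
    simp only [stepVector]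
    split_ifs at hp hq ⊢ <;> omega
  rcases this with ⟨hpq, hs⟩ | hs
  · have := h.1 hpq
    simp only [hs, add_le_add_iff_right] at this
    exact this
  · have := h.2 q p
    simp only [hs, mul_add] at this
    simp only [Function.comp_apply]
    linarith

end Multicharges

/-- Positions are 0-indexed by `Fin ℓ`; `ρ = finRotate ℓ` is the cycle `i ↦ i + 1`. -/
theorem stmt15_general (e ℓ : ℕ) (hl : 1 ≤ ℓ) (t : Fin ℓ → ℤ) (ht : memA e t)
    (σ : Equiv.Perm (Fin ℓ)) (v : Fin ℓ → ℤ)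
    (h : memAbar e (fun j => t (σ j) + (e : ℤ) * v j)) :
    ∃ a : ℤ, ∃ b : ℕ, b ≤ ℓ - 1 ∧
      v = (fun j : Fin ℓ => if j.1 < ℓ - b then a else a + 1) ∧
      σ * ((finRotate ℓ)⁻¹) ^ b ∈ Subgroup.closure
        {τ : Equiv.Perm (Fin ℓ) | ∃ k : ℕ, ∃ hk : k + 1 < ℓ,
          t ⟨k, Nat.lt_of_succ_lt hk⟩ = t ⟨k + 1, hk⟩ ∧
          τ = Equiv.swap ⟨k, Nat.lt_of_succ_lt hk⟩ ⟨k + 1, hk⟩} := by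
  have : NeZero ℓ := ⟨by omega⟩
  obtain ⟨b, hb, hv⟩ := exists_eq_stepVector (monotone_of_memA_of_memAbar ht h)
    (le_add_one_of_memA_of_memAbar ht h 0)
  refine ⟨v 0, b, hb, hv, mem_closure_equalAdjSwaps_of_comp_eq ht.1 ?_⟩
  rw [hv] at h
  have hrot := monotone_comp_finRotate_inv_pow (w := t ∘ σ) (by omega) h
  exact Tuple.unique_monotone (f := t) (σ := σ * (finRotate ℓ)⁻¹ ^ b) (τ := 1) hrot ht.1

/-- if t ∈ A_e^ℓ and t^{σv} ∈ Ā_e^ℓ, then v = v(a,b) for some a ∈ ℤ,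
b ∈ {0,…,ℓ−1}, and σ·ρ^{−b} lies in the subgroup generated by the adjacent transpositions
(k, k+1) with t_k = t_{k+1}.  (Positions are 0-indexed by Fin ℓ; ρ = finRotate ℓ is the
ℓ-cycle i ↦ i + 1; v(a,b) has its first ℓ−b entries equal to a and the last b equal to a+1.) -/
theorem stmt15 (e ℓ : ℕ) (he : 2 ≤ e) (hl : 1 ≤ ℓ) (t : Fin ℓ → ℤ) (ht : memA e t)
    (σ : Equiv.Perm (Fin ℓ)) (v : Fin ℓ → ℤ)
    (h : memAbar e (fun j => t (σ j) + (e : ℤ) * v j)) :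
    ∃ a : ℤ, ∃ b : ℕ, b ≤ ℓ - 1 ∧
      v = (fun j : Fin ℓ => if j.1 < ℓ - b then a else a + 1) ∧
      σ * ((finRotate ℓ)⁻¹) ^ b ∈ Subgroup.closure
        {τ : Equiv.Perm (Fin ℓ) | ∃ k : ℕ, ∃ hk : k + 1 < ℓ,
          t ⟨k, Nat.lt_of_succ_lt hk⟩ = t ⟨k + 1, hk⟩ ∧
          τ = Equiv.swap ⟨k, Nat.lt_of_succ_lt hk⟩ ⟨k + 1, hk⟩} :=
  stmt15_general e ℓ hl t ht σ v h
end
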